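/- (Lemma A.1.) Let U ⊆ ℝⁿ be open, G : U → Matrix (Fin n) (Fin n) ℝ a C^∞ map with N_G = 0, let h₀,…,h_s : U → ℝ be C^∞ functions, and set H(x) = Σ_{k=0}^{s} h_k(x)·G(x)ᵏ. Then there exist C^∞ functions c_{j,k,r} : U → ℝ (0 ≤ j, r ≤ n−1, 0 ≤ k ≤ s) such that, setting α_j(x) = Σ_{k,r} c_{j,k,r}(x)·(G(x)ʳ)ᵀ·∇h_k(x) ∈ ℝⁿ, one has N_H(x)(u,v) = Σ_{j=0}^{n−1} ( ⟨α_j(x), u⟩·G(x)ʲ·v − ⟨α_j(x), v⟩·G(x)ʲ·u ) for all x ∈ U and u, v ∈ ℝⁿ. In particular, N_H = 0 whenever h₀,…,h_s are constant. -/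

import Mathlib

open Matrix

/-- Directional derivative of a matrix field, entrywise. -/
noncomputable def matDirDeriv {d n : ℕ} (G : (Fin d → ℝ) → Matrix (Fin n) (Fin n) ℝ)
    (x w : Fin d → ℝ) : Matrix (Fin n) (Fin n) ℝ :=
  Matrix.of fun i j => fderiv ℝ (fun y => G y i j) x w

/-- The Nijenhuis torsion of a matrix field `G`. -/
noncomputable def nijenhuis {n : ℕ} (G : (Fin n → ℝ) → Matrix (Fin n) (Fin n) ℝ)
    (x u v : Fin n → ℝ) : Fin n → ℝ :=
  (matDirDeriv G x ((G x).mulVec u)).mulVec v - (matDirDeriv G x ((G x).mulVec v)).mulVec u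
    + (G x).mulVec ((matDirDeriv G x v).mulVec u) - (G x).mulVec ((matDirDeriv G x u).mulVec v)

/-- Gradient of a function on `ℝⁿ`. -/
noncomputable def gradV {n : ℕ} (h : (Fin n → ℝ) → ℝ) (x : Fin n → ℝ) : Fin n → ℝ :=
  fun i => fderiv ℝ h x (Pi.single i 1)

open Finset

/-!
Write `Φ = DG(x)` and `ψ(u, w) = Φ(Gu)w - GΦ(u)w`, so that `N_G(u, v) = ψ(u, v) - ψ(v, u)`:
`N_G = 0` says that `ψ` is symmetric. The torsion is additive in the derivative, and
`DH(w) = Σ (dh_k w) Gᵏ + Σ h_k D(Gᵏ)(w)`, so `N_H` splits into two parts.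

The part coming from `Σ h_k D(Gᵏ)` is the torsion of the polynomial `Σ h_k(x) Gᵏ` with frozen
coefficients. The telescoping identity `Φ(Aᵏu) - AᵏΦ(u) = Σ_{j<k} A^(k-1-j) ψ(Aʲu, ·)` writes its
`ψ` as a sum of terms `Aᵃ ψ(Aʲu, Aⁱw)` that is symmetric under exchanging `(j, u)` with `(i, w)`,
so this part vanishes.

The part coming from the `dh_k` is a sum of terms `⟨α, u⟩ Gᵐ v - ⟨α, v⟩ Gᵐ u` with
`α = (Gˡ)ᵀ ∇h_k`. Cayley–Hamilton, in the form `Gᵐ = Σ_{r<n} b_{m,r} Gʳ` with `b_{m,r}` the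
coefficients of `Xᵐ mod χ_G` (polynomials in the entries of `G`, hence smooth), reduces all
powers to `G⁰, …, Gⁿ⁻¹`.
-/

namespace Nijenhuis

variable {R : Type*} [CommRing R] {n : Type*} [Fintype n]

/-- `nijenhuis G x = torsion (G x) (matDirDeriv G x)` definitionally: `B` and `Ψ` stand for the
value and the derivative of the field at a point. -/
def torsion (B : Matrix n n R) (Ψ : (n → R) → Matrix n n R) (u v : n → R) : n → R :=
  Ψ (B *ᵥ u) *ᵥ v - Ψ (B *ᵥ v) *ᵥ u + B *ᵥ (Ψ v *ᵥ u) - B *ᵥ (Ψ u *ᵥ v)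

def halfTorsion (B : Matrix n n R) (Ψ : (n → R) → Matrix n n R) (u w : n → R) : n → R :=
  Ψ (B *ᵥ u) *ᵥ w - B *ᵥ (Ψ u *ᵥ w)

theorem torsion_eq_halfTorsion_sub (B : Matrix n n R) (Ψ : (n → R) → Matrix n n R) (u v : n → R) :
    torsion B Ψ u v = halfTorsion B Ψ u v - halfTorsion B Ψ v u := by
  simp only [torsion, halfTorsion]
  abel

theorem torsion_eq_zero_iff {B : Matrix n n R} {Ψ : (n → R) → Matrix n n R} :
    (∀ u v, torsion B Ψ u v = 0) ↔ ∀ u v, halfTorsion B Ψ u v = halfTorsion B Ψ v u := by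
  simp only [torsion_eq_halfTorsion_sub, sub_eq_zero]

theorem torsion_add (B : Matrix n n R) (Ψ₁ Ψ₂ : (n → R) → Matrix n n R) (u v : n → R) :
    torsion B (fun w => Ψ₁ w + Ψ₂ w) u v = torsion B Ψ₁ u v + torsion B Ψ₂ u v := by
  simp only [torsion, add_mulVec, mulVec_add]
  abel

theorem torsion_sum {ι : Type*} (t : Finset ι) (B : Matrix n n R)
    (Ψ : ι → (n → R) → Matrix n n R) (u v : n → R) :
    torsion B (fun w => ∑ i ∈ t, Ψ i w) u v = ∑ i ∈ t, torsion B (Ψ i) u v := by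
  simp only [torsion, sum_mulVec, mulVec_sum, ← sum_sub_distrib,
    ← sum_add_distrib]

theorem halfTorsion_sum_smul {ι κ : Type*} (s : Finset ι) (t : Finset κ) (c : ι → R)
    (B : ι → Matrix n n R) (d : κ → R) (Ψ : κ → (n → R) →ₗ[R] Matrix n n R) (u w : n → R) :
    halfTorsion (∑ k ∈ s, c k • B k) ⇑(∑ l ∈ t, d l • Ψ l) u w
      = ∑ k ∈ s, ∑ l ∈ t, (c k * d l) • halfTorsion (B k) (Ψ l) u w := by
  simp only [halfTorsion, LinearMap.sum_apply, LinearMap.smul_apply, sum_mulVec, smul_mulVec,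
    map_sum, map_smul, mulVec_sum, mulVec_smul, smul_sub, sum_sub_distrib, Finset.smul_sum,
    smul_smul]
  rw [sum_comm (s := t)]
  simp only [mul_comm (d _)]

def wedge (u v : n → R) : (n → R) →ₗ[R] Matrix n n R →ₗ[R] n → R :=
  LinearMap.mk₂ R (fun α M => (α ⬝ᵥ u) • M *ᵥ v - (α ⬝ᵥ v) • M *ᵥ u)
    (fun α β M => by simp only [add_dotProduct, add_smul]; abel)
    (fun a α M => by simp only [smul_dotProduct, smul_eq_mul, mul_smul, smul_sub])
    (fun α M N => by simp only [add_mulVec, smul_add]; abel)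
    (fun a α M => by simp only [smul_mulVec, smul_comm a, smul_sub])

theorem wedge_apply (u v α : n → R) (M : Matrix n n R) :
    wedge u v α M = (α ⬝ᵥ u) • M *ᵥ v - (α ⬝ᵥ v) • M *ᵥ u :=
  rfl

theorem torsion_dotProduct_smul (B M : Matrix n n R) (g u v : n → R) :
    torsion B (fun w => (g ⬝ᵥ w) • M) u v = wedge u v (Bᵀ *ᵥ g) M - wedge u v g (B * M) := by
  simp only [torsion, wedge_apply, smul_mulVec, mulVec_smul, ← mulVec_mulVec, mulVec_transpose,
    dotProduct_mulVec]
  abel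

variable [DecidableEq n] {V : Type*} [AddCommGroup V] [Module R V]

def powDeriv (A : Matrix n n R) (Φ : V →ₗ[R] Matrix n n R) (l : ℕ) : V →ₗ[R] Matrix n n R :=
  ∑ i ∈ range l, LinearMap.mulLeft R (A ^ (l - 1 - i)) ∘ₗ LinearMap.mulRight R (A ^ i) ∘ₗ Φ

theorem powDeriv_apply (A : Matrix n n R) (Φ : V →ₗ[R] Matrix n n R) (l : ℕ) (w : V) :
    powDeriv A Φ l w = ∑ i ∈ range l, A ^ (l - 1 - i) * Φ w * A ^ i := by
  simp [powDeriv, mul_assoc]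

theorem powDeriv_succ (A : Matrix n n R) (Φ : V →ₗ[R] Matrix n n R) (l : ℕ) (w : V) :
    powDeriv A Φ (l + 1) w = Φ w * A ^ l + A * powDeriv A Φ l w := by
  simp only [powDeriv_apply, sum_range_succ, Nat.add_sub_cancel, Nat.sub_self, pow_zero,
    one_mul, mul_sum]
  rw [add_comm]
  congr 1
  refine sum_congr rfl fun i hi => ?_
  rw [← mul_assoc, ← mul_assoc, ← pow_succ']
  congr 3
  have := mem_range.mp hi
  omega

theorem halfTorsion_pow_left (A : Matrix n n R) (Φ : (n → R) → Matrix n n R) (k : ℕ)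
    (u w : n → R) :
    halfTorsion (A ^ k) Φ u w
      = ∑ j ∈ range k, A ^ (k - 1 - j) *ᵥ halfTorsion A Φ (A ^ j *ᵥ u) w := by
  induction k generalizing u with
  | zero => simp [halfTorsion]
  | succ k ih =>
    have hsplit : halfTorsion (A ^ (k + 1)) Φ u w
        = halfTorsion (A ^ k) Φ (A *ᵥ u) w + A ^ k *ᵥ halfTorsion A Φ u w := by
      simp only [halfTorsion, pow_succ, ← mulVec_mulVec, mulVec_sub]
      abel
    rw [hsplit, ih, sum_range_succ']
    simp [mulVec_mulVec, ← pow_succ, Nat.sub_sub, Nat.add_comm 1]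

theorem halfTorsion_powDeriv {A B : Matrix n n R} (hAB : Commute A B)
    (Φ : (n → R) →ₗ[R] Matrix n n R) (l : ℕ) (u w : n → R) :
    halfTorsion B (powDeriv A Φ l) u w
      = ∑ i ∈ range l, A ^ (l - 1 - i) *ᵥ halfTorsion B Φ u (A ^ i *ᵥ w) := by
  simp only [halfTorsion, powDeriv_apply, sum_mulVec, mulVec_sum, ← sum_sub_distrib]
  refine sum_congr rfl fun i _ => ?_
  simp only [mulVec_sub, mulVec_mulVec, ← mul_assoc, ← (hAB.pow_left _).eq]

theorem halfTorsion_pow_powDeriv (A : Matrix n n R) (Φ : (n → R) →ₗ[R] Matrix n n R) (k l : ℕ)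
    (u w : n → R) :
    halfTorsion (A ^ k) (powDeriv A Φ l) u w
      = ∑ i ∈ range l, ∑ j ∈ range k,
          (A ^ (l - 1 - i) * A ^ (k - 1 - j)) *ᵥ halfTorsion A Φ (A ^ j *ᵥ u) (A ^ i *ᵥ w) := by
  simp only [halfTorsion_powDeriv ((Commute.refl A).pow_right k), halfTorsion_pow_left,
    mulVec_sum, mulVec_mulVec]

theorem halfTorsion_pow_powDeriv_comm {A : Matrix n n R} {Φ : (n → R) →ₗ[R] Matrix n n R}
    (hΦ : ∀ u w, halfTorsion A Φ u w = halfTorsion A Φ w u) (k l : ℕ) (u w : n → R) :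
    halfTorsion (A ^ k) (powDeriv A Φ l) u w = halfTorsion (A ^ l) (powDeriv A Φ k) w u := by
  rw [halfTorsion_pow_powDeriv, halfTorsion_pow_powDeriv, sum_comm]
  simp only [pow_mul_comm A (l - 1 - _), hΦ (A ^ _ *ᵥ u)]

theorem halfTorsion_polynomial_powDeriv_comm {ι : Type*} [Fintype ι] {A : Matrix n n R}
    {Φ : (n → R) →ₗ[R] Matrix n n R} (hΦ : ∀ u w, halfTorsion A Φ u w = halfTorsion A Φ w u)
    (c : ι → R) (e : ι → ℕ) (u w : n → R) :
    halfTorsion (∑ k, c k • A ^ e k) ⇑(∑ l, c l • powDeriv A Φ (e l)) u w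
      = halfTorsion (∑ k, c k • A ^ e k) ⇑(∑ l, c l • powDeriv A Φ (e l)) w u := by
  rw [halfTorsion_sum_smul, halfTorsion_sum_smul, sum_comm]
  refine sum_congr rfl fun l _ => sum_congr rfl fun k _ => ?_
  rw [mul_comm, halfTorsion_pow_powDeriv_comm hΦ]

theorem torsion_polynomial_powDeriv_eq_zero {ι : Type*} [Fintype ι] {A : Matrix n n R}
    {Φ : (n → R) →ₗ[R] Matrix n n R} (hΦ : ∀ u v, torsion A Φ u v = 0)
    (c : ι → R) (e : ι → ℕ) (u v : n → R) :
    torsion (∑ k, c k • A ^ e k) ⇑(∑ l, c l • powDeriv A Φ (e l)) u v = 0 :=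
  torsion_eq_zero_iff.mpr (halfTorsion_polynomial_powDeriv_comm (torsion_eq_zero_iff.mp hΦ) c e) u v

theorem torsion_polynomial_dotProduct {ι : Type*} [Fintype ι] (A : Matrix n n R)
    (c : ι → R) (e : ι → ℕ) (g : ι → n → R) (u v : n → R) :
    torsion (∑ l, c l • A ^ e l) (fun w => ∑ k, (g k ⬝ᵥ w) • A ^ e k) u v
      = ∑ k, ∑ l, c l • (wedge u v ((A ^ e l)ᵀ *ᵥ g k) (A ^ e k)
          - wedge u v (g k) (A ^ (e l + e k))) := by
  rw [torsion_sum]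
  refine sum_congr rfl fun k _ => ?_
  simp only [torsion_dotProduct_smul, transpose_sum, transpose_smul, sum_mulVec, smul_mulVec,
    sum_mul, smul_mul_assoc, ← pow_add, map_sum, map_smul, LinearMap.sum_apply,
    LinearMap.smul_apply, smul_sub, sum_sub_distrib]

theorem wedge_transpose_pow_pow {κ : Type*} [Fintype κ] {A : Matrix n n R} {b : ℕ → κ → R}
    {d : κ → ℕ} (hb : ∀ m, A ^ m = ∑ r, b m r • A ^ d r) (u v g : n → R) (p q : ℕ) :
    wedge u v ((A ^ p)ᵀ *ᵥ g) (A ^ q)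
      = ∑ j, ∑ r, (b q j * b p r) • wedge u v ((A ^ d r)ᵀ *ᵥ g) (A ^ d j) := by
  conv_lhs => rw [hb p, hb q]
  simp only [transpose_sum, transpose_smul, sum_mulVec, smul_mulVec, map_sum, map_smul,
    LinearMap.sum_apply, LinearMap.smul_apply, Finset.smul_sum, smul_smul]

theorem torsion_polynomial_dotProduct_eq_sum_wedge {ι κ : Type*} [Fintype ι] [Fintype κ]
    {A : Matrix n n R} {b : ℕ → κ → R} {d : κ → ℕ} (hb : ∀ m, A ^ m = ∑ r, b m r • A ^ d r)
    (c : ι → R) (e : ι → ℕ) (g : ι → n → R) (u v : n → R) :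
    torsion (∑ l, c l • A ^ e l) (fun w => ∑ k, (g k ⬝ᵥ w) • A ^ e k) u v
      = ∑ j, wedge u v (∑ k, ∑ r, (∑ l, c l * (b (e k) j * b (e l) r - b (e l + e k) j * b 0 r))
          • (A ^ d r)ᵀ *ᵥ g k) (A ^ d j) := by
  have hterm : ∀ k l, c l • (wedge u v ((A ^ e l)ᵀ *ᵥ g k) (A ^ e k)
        - wedge u v (g k) (A ^ (e l + e k)))
      = ∑ j, ∑ r, (c l * (b (e k) j * b (e l) r - b (e l + e k) j * b 0 r))
          • wedge u v ((A ^ d r)ᵀ *ᵥ g k) (A ^ d j) := by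
    intro k l
    rw [show wedge u v (g k) = wedge u v ((A ^ 0)ᵀ *ᵥ g k) by simp, wedge_transpose_pow_pow hb,
      wedge_transpose_pow_pow hb]
    simp only [← sum_sub_distrib, Finset.smul_sum, smul_smul, ← sub_smul, mul_sub]
  simp only [torsion_polynomial_dotProduct, hterm, map_sum, map_smul,
    LinearMap.sum_apply, LinearMap.smul_apply, sum_smul]
  calc _ = ∑ k, ∑ j, ∑ r, ∑ l, (c l * (b (e k) j * b (e l) r - b (e l + e k) j * b 0 r))
        • wedge u v ((A ^ d r)ᵀ *ᵥ g k) (A ^ d j) := by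
        refine sum_congr rfl fun k _ => ?_
        rw [sum_comm]
        exact sum_congr rfl fun j _ => sum_comm
    _ = _ := sum_comm

end Nijenhuis

open Nijenhuis

section Calculus

variable {d n : ℕ}

noncomputable def matDirDerivLin (G : (Fin d → ℝ) → Matrix (Fin n) (Fin n) ℝ) (x : Fin d → ℝ) :
    (Fin d → ℝ) →ₗ[ℝ] Matrix (Fin n) (Fin n) ℝ where
  toFun := matDirDeriv G x
  map_add' v w := by ext i j; simp [matDirDeriv]
  map_smul' a w := by ext i j; simp [matDirDeriv]

theorem fderiv_apply_eq_gradV_dotProduct (f : (Fin d → ℝ) → ℝ) (x w : Fin d → ℝ) :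
    fderiv ℝ f x w = gradV f x ⬝ᵥ w := by
  conv_lhs => rw [← Finset.univ_sum_single w]
  simp only [map_sum, gradV, dotProduct]
  refine sum_congr rfl fun i _ => ?_
  conv_lhs => rw [← mul_one (w i), ← smul_eq_mul, Pi.single_smul', map_smul, smul_eq_mul]
  rw [mul_comm]

theorem matDirDeriv_mul {F K : (Fin d → ℝ) → Matrix (Fin n) (Fin n) ℝ} {x : Fin d → ℝ}
    (hF : ∀ i j, DifferentiableAt ℝ (fun y => F y i j) x)
    (hK : ∀ i j, DifferentiableAt ℝ (fun y => K y i j) x) (w : Fin d → ℝ) :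
    matDirDeriv (fun y => F y * K y) x w
      = matDirDeriv F x w * K x + F x * matDirDeriv K x w := by
  ext i j
  simp only [matDirDeriv, Matrix.add_apply, mul_apply, of_apply]
  rw [fderiv_fun_sum fun m _ => (hF i m).fun_mul (hK m j), _root_.sum_apply,
    ← sum_add_distrib]
  refine sum_congr rfl fun m _ => ?_
  rw [fderiv_fun_mul (hF i m) (hK m j)]
  simp only [_root_.add_apply, _root_.smul_apply, smul_eq_mul]
  ring

theorem differentiableAt_pow_apply {G : (Fin d → ℝ) → Matrix (Fin n) (Fin n) ℝ} {x : Fin d → ℝ}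
    (hG : ∀ i j, DifferentiableAt ℝ (fun y => G y i j) x) (k : ℕ) (i j : Fin n) :
    DifferentiableAt ℝ (fun y => (G y ^ k) i j) x := by
  induction k generalizing j with
  | zero => simp only [pow_zero]; exact differentiableAt_const _
  | succ k ih =>
    simp only [pow_succ, mul_apply]
    exact DifferentiableAt.fun_sum fun m _ => (ih m).mul (hG m j)

theorem matDirDeriv_pow {G : (Fin d → ℝ) → Matrix (Fin n) (Fin n) ℝ} {x : Fin d → ℝ}
    (hG : ∀ i j, DifferentiableAt ℝ (fun y => G y i j) x) (k : ℕ) (w : Fin d → ℝ) :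
    matDirDeriv (fun y => G y ^ k) x w = powDeriv (G x) (matDirDerivLin G x) k w := by
  induction k with
  | zero => ext i j; simp [matDirDeriv, powDeriv]
  | succ k ih =>
    simp only [pow_succ']
    rw [matDirDeriv_mul hG (differentiableAt_pow_apply hG k), ih, powDeriv_succ]
    rfl

theorem matDirDeriv_sum_smul_pow {ι : Type*} [Fintype ι]
    {G : (Fin d → ℝ) → Matrix (Fin n) (Fin n) ℝ} {h : ι → (Fin d → ℝ) → ℝ} {x : Fin d → ℝ}
    (hG : ∀ i j, DifferentiableAt ℝ (fun y => G y i j) x)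
    (hh : ∀ k, DifferentiableAt ℝ (h k) x) (e : ι → ℕ) :
    matDirDeriv (fun y => ∑ k, h k y • G y ^ e k) x
      = fun w => ∑ k, (gradV (h k) x ⬝ᵥ w) • G x ^ e k
          + (∑ k, h k x • powDeriv (G x) (matDirDerivLin G x) (e k)) w := by
  funext w
  ext i j
  have hpow : ∀ k, fderiv ℝ (fun y => (G y ^ e k) i j) x w
      = powDeriv (G x) (matDirDerivLin G x) (e k) w i j := fun k => by
    rw [← matDirDeriv_pow hG]; rfl
  simp only [matDirDeriv, of_apply, Matrix.sum_apply, Matrix.smul_apply, smul_eq_mul]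
  rw [fderiv_fun_sum fun k _ => (hh k).fun_mul (differentiableAt_pow_apply hG (e k) i j),
    _root_.sum_apply]
  simp only [Matrix.add_apply, Matrix.sum_apply, Matrix.smul_apply, LinearMap.sum_apply,
    LinearMap.smul_apply, smul_eq_mul, ← sum_add_distrib]
  refine sum_congr rfl fun k _ => ?_
  rw [fderiv_fun_mul (hh k) (differentiableAt_pow_apply hG (e k) i j)]
  simp only [_root_.add_apply, _root_.smul_apply, smul_eq_mul, hpow,
    fderiv_apply_eq_gradV_dotProduct]
  ring

end Calculus

section PowCoeff

open Polynomial

variable {R : Type*} [CommRing R] {N : ℕ}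

noncomputable def powCoeff (A : Matrix (Fin N) (Fin N) R) (m : ℕ) (r : Fin N) : R :=
  (X ^ m %ₘ A.charpoly).coeff r

theorem pow_eq_sum_powCoeff [Nontrivial R] (A : Matrix (Fin N) (Fin N) R) (m : ℕ) :
    A ^ m = ∑ r, powCoeff A m r • A ^ (r : ℕ) := by
  rcases N.eq_zero_or_pos with rfl | hN
  · exact Subsingleton.elim _ _
  have hdeg : A.charpoly.natDegree = N := by
    rw [charpoly_natDegree_eq_dim, Fintype.card_fin]
  have hne : A.charpoly ≠ 1 := fun h1 => by rw [h1, natDegree_one] at hdeg; omega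
  have hlt : (X ^ m %ₘ A.charpoly).natDegree < N :=
    (natDegree_modByMonic_lt (X ^ m) A.charpoly_monic hne).trans_eq hdeg
  rw [pow_eq_aeval_mod_charpoly, aeval_eq_sum_range' hlt,
    ← Fin.sum_univ_eq_sum_range (fun r => (X ^ m %ₘ A.charpoly).coeff r • A ^ r)]
  rfl

theorem powCoeff_eq_eval_univ (A : Matrix (Fin N) (Fin N) R) (m : ℕ) (r : Fin N) :
    powCoeff A m r
      = MvPolynomial.eval (fun ij : Fin N × Fin N => A ij.1 ij.2)
          ((X ^ m %ₘ charpoly.univ R (Fin N)).coeff r) := by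
  rw [MvPolynomial.eval, ← coeff_map, map_modByMonic _ (charpoly.univ_monic R (Fin N)),
    charpoly.univ_map_eval₂Hom, Polynomial.map_pow, map_X]
  rfl

theorem contDiffOn_powCoeff {E : Type*} [NormedAddCommGroup E] [NormedSpace ℝ E]
    {U : Set E} {k : WithTop ℕ∞} {G : E → Matrix (Fin N) (Fin N) ℝ}
    (hG : ∀ i j, ContDiffOn ℝ k (fun x => G x i j) U) (m : ℕ) (r : Fin N) :
    ContDiffOn ℝ k (fun x => powCoeff (G x) m r) U := by
  simp only [powCoeff_eq_eval_univ]
  exact (AnalyticOnNhd.eval_mvPolynomial _).contDiff.comp_contDiffOn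
    (contDiffOn_pi.mpr fun ij => hG ij.1 ij.2)

end PowCoeff

/-- Lemma A.1: if `N_G = 0` and `H = Σ_k h_k·Gᵏ`, then
`N_H(x)(u,v) = Σ_j (α_j(u)·Gʲv − α_j(v)·Gʲu)` where each `α_j` is a functional combination of
the 1-forms `dh_k∘Gʳ`; in particular `N_H = 0` when the `h_k` are constant. -/
theorem lemma_A_1 {n s : ℕ} (U : Set (Fin n → ℝ)) (hU : IsOpen U)
    (G : (Fin n → ℝ) → Matrix (Fin n) (Fin n) ℝ)
    (hGs : ∀ i j, ContDiffOn ℝ (⊤ : ℕ∞) (fun x => G x i j) U)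
    (hNG : ∀ x ∈ U, ∀ u v : Fin n → ℝ, nijenhuis G x u v = 0)
    (h : Fin (s + 1) → (Fin n → ℝ) → ℝ)
    (hh : ∀ k, ContDiffOn ℝ (⊤ : ℕ∞) (h k) U) :
    (∃ c : Fin n → Fin (s + 1) → Fin n → ((Fin n → ℝ) → ℝ),
      (∀ j k r, ContDiffOn ℝ (⊤ : ℕ∞) (c j k r) U) ∧
      ∀ x ∈ U, ∀ u v : Fin n → ℝ,
        nijenhuis (fun y => ∑ k, h k y • G y ^ (k : ℕ)) x u v
          = ∑ j : Fin n,
              (((∑ k, ∑ r, c j k r x • ((G x ^ (r : ℕ))ᵀ.mulVec (gradV (h k) x))) ⬝ᵥ u)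
                  • (G x ^ (j : ℕ)).mulVec v
                - ((∑ k, ∑ r, c j k r x • ((G x ^ (r : ℕ))ᵀ.mulVec (gradV (h k) x))) ⬝ᵥ v)
                  • (G x ^ (j : ℕ)).mulVec u)) ∧
    ((∀ k, ∃ ck : ℝ, ∀ x, h k x = ck) →
      ∀ x ∈ U, ∀ u v : Fin n → ℝ,
        nijenhuis (fun y => ∑ k, h k y • G y ^ (k : ℕ)) x u v = 0) := by
  set b : ℕ → Fin n → (Fin n → ℝ) → ℝ := fun m r x => powCoeff (G x) m r
  set c : Fin n → Fin (s + 1) → Fin n → (Fin n → ℝ) → ℝ := fun j k r x =>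
    ∑ l, h l x * (b k j x * b l r x - b (l + k) j x * b 0 r x)
  have hdiff : ∀ x ∈ U, ∀ {f : (Fin n → ℝ) → ℝ}, ContDiffOn ℝ (⊤ : ℕ∞) f U →
      DifferentiableAt ℝ f x := fun x hx f hf =>
    (hf.differentiableOn (by simp)).differentiableAt (hU.mem_nhds hx)
  have key : ∀ x ∈ U, ∀ u v : Fin n → ℝ,
      nijenhuis (fun y => ∑ k, h k y • G y ^ (k : ℕ)) x u v
        = ∑ j : Fin n, wedge u v (∑ k, ∑ r, c j k r x • (G x ^ (r : ℕ))ᵀ *ᵥ gradV (h k) x)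
            (G x ^ (j : ℕ)) := by
    intro x hx u v
    change torsion _ (matDirDeriv _ x) u v = _
    rw [matDirDeriv_sum_smul_pow (fun i j => hdiff x hx (hGs i j)) (fun k => hdiff x hx (hh k)),
      torsion_add, torsion_polynomial_powDeriv_eq_zero (Φ := matDirDerivLin G x) (hNG x hx), add_zero,
      torsion_polynomial_dotProduct_eq_sum_wedge (pow_eq_sum_powCoeff (G x))]
  refine ⟨⟨c, fun j k r => ?_, key⟩, fun hconst x hx u v => ?_⟩
  · have hb : ∀ m r, ContDiffOn ℝ (⊤ : ℕ∞) (b m r) U := contDiffOn_powCoeff hGs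
    exact ContDiffOn.sum fun l _ => (hh l).mul
      (((hb _ _).mul (hb _ _)).sub ((hb _ _).mul (hb _ _)))
  · have hgrad : ∀ k, gradV (h k) x = 0 := fun k => by
      obtain ⟨ck, hck⟩ := hconst k
      ext i
      simp [gradV, funext hck]
    simp [key x hx u v, hgrad]
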